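/- Let G be a groupoid, R an associative ring, and α = (D_g, α_g)_{g∈G} a partial action of G on R such that D_g is s-unital for every g ∈ G and R = ⊕_{e∈G₀} D_e. Then R is G-simple if, and only if, R ⋊_α G is graded simple. -/

import Mathlib

open scoped Classical

/-- A (discrete) groupoid, presented as its set of morphisms `G`, with source map `s`,
range map `r`, inversion `inv` and a partially defined multiplication `mul`.
The units (identity morphisms, i.e. the objects) are the elements `e` with `r e = e`. -/
structure DGroupoid (G : Type*) where
  s : G → G
  r : G → G
  inv : G → G
  mul : (g h : G) → s g = r h → G
  s_inv : ∀ g, s (inv g) = r g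
  r_inv : ∀ g, r (inv g) = s g
  inv_inv : ∀ g, inv (inv g) = g
  r_mul : ∀ g h (p : s g = r h), r (mul g h p) = r g
  s_mul : ∀ g h (p : s g = r h), s (mul g h p) = s h
  r_idem : ∀ g, r (r g) = r g
  s_of_r : ∀ g, s (r g) = r g
  r_of_s : ∀ g, r (s g) = s g
  s_idem : ∀ g, s (s g) = s g
  assoc : ∀ g h k (p : s g = r h) (q : s h = r k) (pq : s (mul g h p) = r k)
      (qp : s g = r (mul h k q)), mul (mul g h p) k pq = mul g (mul h k q) qp
  id_mul : ∀ g (p : s (r g) = r g), mul (r g) g p = g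
  mul_id : ∀ g (p : s g = r (s g)), mul g (s g) p = g
  mul_inv : ∀ g (p : s g = r (inv g)), mul g (inv g) p = r g
  inv_mul : ∀ g (p : s (inv g) = r g), mul (inv g) g p = s g

namespace DGroupoid

/-- `e` is a unit (an object, identified with its identity morphism) of the groupoid. -/
def unit {G : Type*} (𝔾 : DGroupoid G) (e : G) : Prop := 𝔾.r e = e

end DGroupoid

section RingDefs

variable {R : Type*} [NonUnitalRing R]

/-- A subset of a (possibly non-unital) ring is a two-sided ideal. -/
def IsRingIdeal (J : Set R) : Prop :=
  (0 : R) ∈ J ∧ (∀ x ∈ J, ∀ y ∈ J, x + y ∈ J) ∧ (∀ x ∈ J, -x ∈ J) ∧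
    ∀ x ∈ J, ∀ y : R, x * y ∈ J ∧ y * x ∈ J

/-- A subset of a ring, viewed as a ring, is s-unital: every `x` in it lies in
`xT ∩ Tx`. -/
def IsSUnitalSet (J : Set R) : Prop :=
  ∀ x ∈ J, (∃ u ∈ J, x * u = x) ∧ (∃ v ∈ J, v * x = x)

end RingDefs

/-- A partial action `α = (D_g, α_g)_{g ∈ G}` of a groupoid `𝔾` on a
(possibly non-unital, associative) ring `R`:  each `D_{r g}` is a two-sided ideal of `R`,
each `D_g` is a two-sided ideal of `D_{r g}`, and `α_g = act g` restricts to a ring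
isomorphism `D_{g⁻¹} → D_g` (the function `act g` is arbitrary outside `D_{g⁻¹}`),
satisfying the axioms of a partial action. -/
structure PartialAction {G : Type*} (𝔾 : DGroupoid G) (R : Type*) [NonUnitalRing R] where
  D : G → Set R
  zero_mem : ∀ g, (0 : R) ∈ D g
  add_mem : ∀ g, ∀ x ∈ D g, ∀ y ∈ D g, x + y ∈ D g
  neg_mem : ∀ g, ∀ x ∈ D g, -x ∈ D g
  subset_r : ∀ g, D g ⊆ D (𝔾.r g)
  idealR : ∀ g, IsRingIdeal (D (𝔾.r g))
  idealInR : ∀ g, ∀ x ∈ D g, ∀ y ∈ D (𝔾.r g), x * y ∈ D g ∧ y * x ∈ D g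
  act : G → R → R
  act_mem : ∀ g, ∀ x ∈ D (𝔾.inv g), act g x ∈ D g
  act_add : ∀ g, ∀ x ∈ D (𝔾.inv g), ∀ y ∈ D (𝔾.inv g), act g (x + y) = act g x + act g y
  act_mul : ∀ g, ∀ x ∈ D (𝔾.inv g), ∀ y ∈ D (𝔾.inv g), act g (x * y) = act g x * act g y
  act_inv : ∀ g, ∀ x ∈ D (𝔾.inv g), act (𝔾.inv g) (act g x) = x
  act_unit : ∀ e, 𝔾.unit e → ∀ x ∈ D e, act e x = x
  act_comp_mem : ∀ g h (p : 𝔾.s g = 𝔾.r h), ∀ x, x ∈ D (𝔾.inv g) → x ∈ D h →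
      act (𝔾.inv h) x ∈ D (𝔾.inv (𝔾.mul g h p))
  act_comp : ∀ g h (p : 𝔾.s g = 𝔾.r h), ∀ x ∈ D (𝔾.inv h), act h x ∈ D (𝔾.inv g) →
      act g (act h x) = act (𝔾.mul g h p) x

namespace PartialAction

variable {G : Type*} {R : Type*} [NonUnitalRing R] {𝔾 : DGroupoid G} (P : PartialAction 𝔾 R)

/-- `R = ⊕_{e ∈ G₀} D_e`: every element of `R` decomposes as a finite sum of elements
of the `D_e` (`e` a unit), and the decomposition is unique (a finite sum of elements of
the distinct `D_e`'s which vanishes has all terms zero). -/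
def directSum : Prop :=
  (∀ x : R, ∃ f : G →₀ R, (∀ g ∈ f.support, 𝔾.unit g) ∧ (∀ g, f g ∈ P.D g) ∧
      (f.sum fun _ v => v) = x) ∧
    ∀ f : G →₀ R, (∀ g ∈ f.support, 𝔾.unit g) → (∀ g, f g ∈ P.D g) →
      (f.sum fun _ v => v) = 0 → f = 0

/-- The carrier of the partial skew groupoid ring `R ⋊_α G`: finitely supported
functions `a : G →₀ R` (thought of as `Σ_g a_g δ_g`) with `a g ∈ D g`. -/
def carrier : Set (G →₀ R) := {a | ∀ g, a g ∈ P.D g}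

/-- The multiplication of the partial skew groupoid ring:
`(a_g δ_g)(b_h δ_h) = α_g(α_{g⁻¹}(a_g) b_h) δ_{gh}` when `(g,h)` is composable,
and `0` otherwise. -/
noncomputable def skewMul (a b : G →₀ R) : G →₀ R :=
  a.support.sum fun g => b.support.sum fun h =>
    if p : 𝔾.s g = 𝔾.r h then
      Finsupp.single (𝔾.mul g h p) (P.act g (P.act (𝔾.inv g) (a g) * b h))
    else 0

/-- The subset `⊕_{e ∈ G₀} D_e δ_e` of `R ⋊_α G`: elements supported on units. -/
def diag : Set (G →₀ R) := {a | (∀ g, a g ∈ P.D g) ∧ ∀ g ∈ a.support, 𝔾.unit g}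

/-- `I` is a two-sided ideal of the partial skew groupoid ring `R ⋊_α G`. -/
def IsSkewIdeal (I : Set (G →₀ R)) : Prop :=
  I ⊆ P.carrier ∧ (0 : G →₀ R) ∈ I ∧ (∀ x ∈ I, ∀ y ∈ I, x + y ∈ I) ∧ (∀ x ∈ I, -x ∈ I) ∧
    ∀ x ∈ I, ∀ y ∈ P.carrier, P.skewMul x y ∈ I ∧ P.skewMul y x ∈ I

/-- The projection `P₀ : R ⋊_α G → R`, `Σ_g a_g δ_g ↦ Σ_{e ∈ G₀} a_e`. -/
noncomputable def P0 (_P : PartialAction 𝔾 R) (a : G →₀ R) : R :=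
  a.sum fun g v => if 𝔾.unit g then v else 0

/-- An ideal `I` of `R ⋊_α G` is `G`-graded if it is generated by its homogeneous
components, i.e. `I = ⊕_g (I ∩ D_g δ_g)`. -/
def IsGradedIdeal (I : Set (G →₀ R)) : Prop :=
  P.IsSkewIdeal I ∧ ∀ a ∈ I, ∀ g : G, Finsupp.single g (a g) ∈ I

/-- `J` is a `G`-invariant (two-sided) ideal of `R`: `α_g(D_{g⁻¹} ∩ J) ⊆ J`. -/
def IsInvIdeal (J : Set R) : Prop :=
  IsRingIdeal J ∧ ∀ g, ∀ x ∈ P.D (𝔾.inv g) ∩ J, P.act g x ∈ J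

/-- The subset `J ⋊_{α^J} G = ⊕_g (J ∩ D_g) δ_g` of `R ⋊_α G` attached to a
`G`-invariant ideal `J` of `R`. -/
def skewOf (J : Set R) : Set (G →₀ R) := {a | ∀ g, a g ∈ P.D g ∩ J}

/-- `⊕_{e ∈ G₀} D_e δ_e` is a maximal commutative subring of `R ⋊_α G`: it is
commutative and coincides with its centralizer. -/
def IsMaxCommDiag : Prop :=
  (∀ a ∈ P.diag, ∀ b ∈ P.diag, P.skewMul a b = P.skewMul b a) ∧
    ∀ b ∈ P.carrier, (∀ a ∈ P.diag, P.skewMul a b = P.skewMul b a) → b ∈ P.diag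

/-- The partial action has the intersection property: every nonzero ideal of
`R ⋊_α G` intersects `⊕_{e ∈ G₀} D_e δ_e` nontrivially. -/
def HasIntersectionProperty : Prop :=
  ∀ I : Set (G →₀ R), P.IsSkewIdeal I → I ≠ {0} → I ∩ P.diag ≠ {0}

/-- `R` is `G`-simple: the only `G`-invariant ideals of `R` are `{0}` and `R`. -/
def GSimple : Prop := ∀ J : Set R, P.IsInvIdeal J → J = {0} ∨ J = Set.univ

/-- `R` is `G`-prime: if `I, J` are `G`-invariant ideals with `IJ = {0}`, then
`I = {0}` or `J = {0}`. -/
def GPrime : Prop :=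
  ∀ I J : Set R, P.IsInvIdeal I → P.IsInvIdeal J →
    (∀ x ∈ I, ∀ y ∈ J, x * y = 0) → I = {0} ∨ J = {0}

/-- `R ⋊_α G` is graded simple. -/
def GradedSimple : Prop :=
  ∀ I : Set (G →₀ R), P.IsGradedIdeal I → I = {0} ∨ I = P.carrier

/-- `R ⋊_α G` is graded prime. -/
def GradedPrime : Prop :=
  ∀ I J : Set (G →₀ R), P.IsGradedIdeal I → P.IsGradedIdeal J →
    (∀ x ∈ I, ∀ y ∈ J, P.skewMul x y = 0) → I = {0} ∨ J = {0}

/-- `R ⋊_α G` is a prime ring. -/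
def SkewPrime : Prop :=
  ∀ I J : Set (G →₀ R), P.IsSkewIdeal I → P.IsSkewIdeal J →
    (∀ x ∈ I, ∀ y ∈ J, P.skewMul x y = 0) → I = {0} ∨ J = {0}

/-- `R ⋊_α G` is a simple ring. -/
def SkewSimple : Prop :=
  ∀ I : Set (G →₀ R), P.IsSkewIdeal I → I = {0} ∨ I = P.carrier

end PartialAction

/-!
For a `G`-invariant ideal `J` of `R`, `J ⋊ G = ⊕_g (D_g ∩ J) δ_g` is a graded ideal; it is nonzero
when `J` is, since the `D_e`-components of `x ∈ J` are `x u ∈ J` for s-units `u` (the `D_e` being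
mutually orthogonal because `R = ⊕_e D_e`). Conversely, for a graded ideal `I`, let `J` be the image
of `I ∩ ⊕_{e ∈ G₀} D_e δ_e` under `Σ_e a_e δ_e ↦ Σ_e a_e`. By orthogonality this map is
multiplicative on the diagonal, so `J` is an ideal, and multiplying by homogeneous s-units moves
`c δ_g ∈ I` to `c δ_{r g}` and back, which makes `J` `G`-invariant and nonzero. Then `J = R` puts
every `c δ_g` into `I`.
-/

namespace DGroupoid

variable {G : Type*} (𝔾 : DGroupoid G)

theorem mul_congr {g g' h h' : G} (hg : g = g') (hh : h = h')
    (p : 𝔾.s g = 𝔾.r h) (p' : 𝔾.s g' = 𝔾.r h') : 𝔾.mul g h p = 𝔾.mul g' h' p' := by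
  subst hg hh; rfl

variable {𝔾}

theorem unit.s_eq {e : G} (he : 𝔾.unit e) : 𝔾.s e = e := by
  have h := 𝔾.s_of_r e
  rwa [he] at h

theorem unit_r (g : G) : 𝔾.unit (𝔾.r g) := 𝔾.r_idem g

theorem unit_s (g : G) : 𝔾.unit (𝔾.s g) := 𝔾.r_of_s g

theorem unit.inv_eq {e : G} (he : 𝔾.unit e) : 𝔾.inv e = e := by
  have hre : 𝔾.r (𝔾.inv e) = e := by rw [𝔾.r_inv, he.s_eq]
  have p : 𝔾.s e = 𝔾.r (𝔾.inv e) := by rw [hre, he.s_eq]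
  calc 𝔾.inv e = 𝔾.mul (𝔾.r (𝔾.inv e)) (𝔾.inv e) (𝔾.s_of_r _) := (𝔾.id_mul _ _).symm
    _ = 𝔾.mul e (𝔾.inv e) p := 𝔾.mul_congr hre rfl _ _
    _ = e := (𝔾.mul_inv e p).trans he

end DGroupoid

theorem IsRingIdeal.sum_mem {ι R : Type*} [NonUnitalRing R] {J : Set R} (hJ : IsRingIdeal J)
    (s : Finset ι) {f : ι → R} (hf : ∀ i ∈ s, f i ∈ J) : ∑ i ∈ s, f i ∈ J :=
  Finset.sum_induction f (· ∈ J) (fun x y hx hy => hJ.2.1 x hx y hy) hJ.1 hf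

noncomputable def coeffSum (G R : Type*) [NonUnitalRing R] : (G →₀ R) →+ R :=
  Finsupp.liftAddHom fun _ => AddMonoidHom.id R

theorem coeffSum_apply {G R : Type*} [NonUnitalRing R] (f : G →₀ R) :
    coeffSum G R f = ∑ g ∈ f.support, f g := rfl

theorem coeffSum_single {G R : Type*} [NonUnitalRing R] (g : G) (a : R) :
    coeffSum G R (Finsupp.single g a) = a :=
  Finsupp.sum_single_index rfl

theorem exists_mem_ne_zero_of_ne_singleton {M : Type*} [Zero M] {S : Set M} (h0 : (0 : M) ∈ S)
    (h : S ≠ {0}) : ∃ x ∈ S, x ≠ 0 := by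
  by_contra! hS
  exact h (Set.eq_singleton_iff_unique_mem.2 ⟨h0, hS⟩)

namespace PartialAction

variable {G R : Type*} [NonUnitalRing R] {𝔾 : DGroupoid G} (P : PartialAction 𝔾 R)

section Basic

theorem act_zero (g : G) : P.act g 0 = 0 := by
  simpa using P.act_add g 0 (P.zero_mem _) 0 (P.zero_mem _)

theorem mem_D_inv_inv {g : G} {x : R} (hx : x ∈ P.D g) : x ∈ P.D (𝔾.inv (𝔾.inv g)) := by
  rwa [𝔾.inv_inv]

theorem act_act_inv {g : G} {x : R} (hx : x ∈ P.D g) : P.act g (P.act (𝔾.inv g) x) = x := by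
  simpa only [𝔾.inv_inv] using P.act_inv (𝔾.inv g) x (P.mem_D_inv_inv hx)

theorem act_inv_mem {g : G} {x : R} (hx : x ∈ P.D g) : P.act (𝔾.inv g) x ∈ P.D (𝔾.inv g) :=
  P.act_mem (𝔾.inv g) x (P.mem_D_inv_inv hx)

theorem act_mem_D_mul {g h : G} (p : 𝔾.s g = 𝔾.r h) {z : R}
    (hzg : z ∈ P.D (𝔾.inv g)) (hzh : z ∈ P.D h) : P.act g z ∈ P.D (𝔾.mul g h p) := by
  have hcomp := P.act_comp g h p _ (P.act_inv_mem hzh) (by rwa [P.act_act_inv hzh])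
  rw [P.act_act_inv hzh] at hcomp
  exact hcomp ▸ P.act_mem _ _ (P.act_comp_mem g h p z hzg hzh)

theorem D_inv_subset_D_s (g : G) : P.D (𝔾.inv g) ⊆ P.D (𝔾.s g) := by
  simpa only [𝔾.r_inv] using P.subset_r (𝔾.inv g)

theorem isRingIdeal_D_of_unit {e : G} (he : 𝔾.unit e) : IsRingIdeal (P.D e) := by
  have h := P.idealR e
  rwa [he] at h

theorem single_mem_carrier {g : G} {a : R} (ha : a ∈ P.D g) :
    Finsupp.single g a ∈ P.carrier := by
  intro k
  rw [Finsupp.single_apply]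
  split_ifs with hk
  · exact hk ▸ ha
  · exact P.zero_mem k

theorem diag_subset_carrier : P.diag ⊆ P.carrier := fun _ ha => ha.1

theorem single_mem_diag {e : G} (he : 𝔾.unit e) {c : R} (hc : c ∈ P.D e) :
    Finsupp.single e c ∈ P.diag :=
  ⟨P.single_mem_carrier hc, fun _ hg =>
    Finset.mem_singleton.1 (Finsupp.support_single_subset hg) ▸ he⟩

def diagAddSubgroup : AddSubgroup (G →₀ R) where
  carrier := P.diag
  zero_mem' := ⟨fun g => P.zero_mem g, by simp⟩
  add_mem' {a b} ha hb :=
    ⟨fun g => P.add_mem g _ (ha.1 g) _ (hb.1 g), fun g hg =>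
      (Finset.mem_union.1 (Finsupp.support_add hg)).elim (ha.2 g) (hb.2 g)⟩
  neg_mem' {a} ha := ⟨fun g => P.neg_mem g _ (ha.1 g), fun g hg => ha.2 g (by simpa using hg)⟩

def diagSum (I : Set (G →₀ R)) : Set R := coeffSum G R '' (I ∩ P.diag)

end Basic

section Products

theorem skewMul_single_single (g h : G) (a b : R) :
    P.skewMul (Finsupp.single g a) (Finsupp.single h b) =
      if p : 𝔾.s g = 𝔾.r h then
        Finsupp.single (𝔾.mul g h p) (P.act g (P.act (𝔾.inv g) a * b)) else 0 := by
  unfold skewMul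
  rcases eq_or_ne a 0 with rfl | ha
  · split_ifs <;> simp [P.act_zero]
  rcases eq_or_ne b 0 with rfl | hb
  · split_ifs <;> simp [P.act_zero]
  simp [Finsupp.support_single _ ha, Finsupp.support_single _ hb]

theorem skewMul_single_single_inv (g : G) (a b : R) :
    P.skewMul (Finsupp.single g a) (Finsupp.single (𝔾.inv g) b) =
      Finsupp.single (𝔾.r g) (P.act g (P.act (𝔾.inv g) a * b)) := by
  rw [P.skewMul_single_single, dif_pos (𝔾.r_inv g).symm, 𝔾.mul_inv]

theorem skewMul_single_r_single {g : G} {a b : R} (ha : a ∈ P.D (𝔾.r g)) (hb : b ∈ P.D g) :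
    P.skewMul (Finsupp.single (𝔾.r g) a) (Finsupp.single g b) = Finsupp.single g (a * b) := by
  have he := DGroupoid.unit_r (𝔾 := 𝔾) g
  have hab : a * b ∈ P.D (𝔾.r g) := P.subset_r g (P.idealInR g b hb a ha).2
  rw [P.skewMul_single_single, dif_pos (𝔾.s_of_r g), 𝔾.id_mul, he.inv_eq,
    P.act_unit _ he a ha, P.act_unit _ he _ hab]

theorem skewMul_mem_of_terms_mem {S : Set (G →₀ R)} (h0 : (0 : G →₀ R) ∈ S)
    (hadd : ∀ x ∈ S, ∀ y ∈ S, x + y ∈ S) {a b : G →₀ R}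
    (hterm : ∀ g h (p : 𝔾.s g = 𝔾.r h),
      Finsupp.single (𝔾.mul g h p) (P.act g (P.act (𝔾.inv g) (a g) * b h)) ∈ S) :
    P.skewMul a b ∈ S := by
  refine Finset.sum_induction _ (· ∈ S) (fun x y hx hy => hadd x hx y hy) h0 fun g _ => ?_
  refine Finset.sum_induction _ (· ∈ S) (fun x y hx hy => hadd x hx y hy) h0 fun h _ => ?_
  split_ifs with p
  exacts [hterm g h p, h0]

end Products

section Graded

variable {P}

theorem act_act_inv_mul_mem {J : Set R} (hJ : P.IsInvIdeal J) {g h : G} (p : 𝔾.s g = 𝔾.r h)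
    {a b : R} (ha : a ∈ P.D g) (hb : b ∈ P.D h) (hab : a ∈ J ∨ b ∈ J) :
    P.act g (P.act (𝔾.inv g) a * b) ∈ P.D (𝔾.mul g h p) ∩ J := by
  have hz : P.act (𝔾.inv g) a ∈ P.D (𝔾.inv g) := P.act_inv_mem ha
  have hbr : b ∈ P.D (𝔾.r (𝔾.inv g)) := by rw [𝔾.r_inv, p]; exact P.subset_r h hb
  have hzr : P.act (𝔾.inv g) a ∈ P.D (𝔾.r h) := by
    rw [← p, ← 𝔾.r_inv]; exact P.subset_r _ hz
  have hzb_g : P.act (𝔾.inv g) a * b ∈ P.D (𝔾.inv g) := (P.idealInR _ _ hz b hbr).1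
  have hzb_h : P.act (𝔾.inv g) a * b ∈ P.D h := (P.idealInR h b hb _ hzr).2
  have hzbJ : P.act (𝔾.inv g) a * b ∈ J := by
    rcases hab with haJ | hbJ
    · exact (hJ.1.2.2.2 _ (hJ.2 (𝔾.inv g) a ⟨P.mem_D_inv_inv ha, haJ⟩) b).1
    · exact (hJ.1.2.2.2 b hbJ _).2
  exact ⟨P.act_mem_D_mul p hzb_g hzb_h, hJ.2 g _ ⟨hzb_g, hzbJ⟩⟩

theorem single_mem_skewOf {J : Set R} (hJ0 : (0 : R) ∈ J) {g : G} {a : R}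
    (ha : a ∈ P.D g ∩ J) : Finsupp.single g a ∈ P.skewOf J := by
  intro k
  rw [Finsupp.single_apply]
  split_ifs with hk
  · exact hk ▸ ha
  · exact ⟨P.zero_mem k, hJ0⟩

theorem isGradedIdeal_skewOf {J : Set R} (hJ : P.IsInvIdeal J) :
    P.IsGradedIdeal (P.skewOf J) := by
  have hJ0 := hJ.1.1
  have h0 : (0 : G →₀ R) ∈ P.skewOf J := fun g => ⟨P.zero_mem g, hJ0⟩
  have hadd : ∀ x ∈ P.skewOf J, ∀ y ∈ P.skewOf J, x + y ∈ P.skewOf J := fun x hx y hy g =>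
    ⟨P.add_mem g _ (hx g).1 _ (hy g).1, hJ.1.2.1 _ (hx g).2 _ (hy g).2⟩
  refine ⟨⟨fun x hx g => (hx g).1, h0, hadd, fun x hx g => ?_, fun x hx y hy => ⟨?_, ?_⟩⟩,
    fun a ha g => single_mem_skewOf hJ0 (ha g)⟩
  · exact ⟨P.neg_mem g _ (hx g).1, hJ.1.2.2.1 _ (hx g).2⟩
  · exact P.skewMul_mem_of_terms_mem h0 hadd fun g h p =>
      single_mem_skewOf hJ0 (act_act_inv_mul_mem hJ p (hx g).1 (hy h) (.inl (hx g).2))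
  · exact P.skewMul_mem_of_terms_mem h0 hadd fun g h p =>
      single_mem_skewOf hJ0 (act_act_inv_mul_mem hJ p (hy g) (hx h).1 (.inr (hx h).2))

theorem IsSkewIdeal.sum_mem {I : Set (G →₀ R)} (hI : P.IsSkewIdeal I) {ι : Type*}
    (s : Finset ι) {f : ι → G →₀ R} (hf : ∀ i ∈ s, f i ∈ I) : ∑ i ∈ s, f i ∈ I :=
  Finset.sum_induction f (· ∈ I) (fun x y hx hy => hI.2.2.1 x hx y hy) hI.2.1 hf

theorem IsSkewIdeal.mem_of_forall_single_mem {I : Set (G →₀ R)} (hI : P.IsSkewIdeal I)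
    {b : G →₀ R} (hb : ∀ g, Finsupp.single g (b g) ∈ I) : b ∈ I :=
  Finsupp.sum_single b ▸ hI.sum_mem _ fun g _ => hb g

theorem IsSkewIdeal.single_r_mem (hsu : ∀ g, IsSUnitalSet (P.D g)) {I : Set (G →₀ R)}
    (hI : P.IsSkewIdeal I) {g : G} {c : R} (hc : c ∈ P.D g) (hcI : Finsupp.single g c ∈ I) :
    Finsupp.single (𝔾.r g) c ∈ I := by
  obtain ⟨v, hv, hcv⟩ := (hsu (𝔾.inv g) _ (P.act_inv_mem hc)).1
  have hmul := (hI.2.2.2.2 _ hcI _ (P.single_mem_carrier hv)).1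
  rwa [P.skewMul_single_single_inv, hcv, P.act_act_inv hc] at hmul

theorem IsSkewIdeal.single_mem_of_single_r_mem (hsu : ∀ g, IsSUnitalSet (P.D g))
    {I : Set (G →₀ R)} (hI : P.IsSkewIdeal I) {g : G} {c : R} (hc : c ∈ P.D g)
    (hcI : Finsupp.single (𝔾.r g) c ∈ I) : Finsupp.single g c ∈ I := by
  obtain ⟨u, hu, hcu⟩ := (hsu g c hc).1
  have hmul := (hI.2.2.2.2 _ hcI _ (P.single_mem_carrier hu)).1
  rwa [P.skewMul_single_r_single (P.subset_r g hc) hu, hcu] at hmul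

end Graded

section DirectSum

variable {P}

theorem exists_mem_diag_coeffSum_eq (hds : P.directSum) (x : R) :
    ∃ f ∈ P.diag, coeffSum G R f = x :=
  let ⟨f, hunit, hD, hsum⟩ := hds.1 x
  ⟨f, ⟨hD, hunit⟩, hsum⟩

theorem injOn_coeffSum_diag (hds : P.directSum) : Set.InjOn (coeffSum G R) P.diag := by
  intro a ha b hb hab
  have hsub : a - b ∈ P.diag := P.diagAddSubgroup.sub_mem ha hb
  have hsum : coeffSum G R (a - b) = 0 := by rw [map_sub, hab, sub_self]
  exact sub_eq_zero.1 (hds.2 _ hsub.2 hsub.1 hsum)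

/-- Distinct `D_e` meet only in `0` by uniqueness of the decomposition, and `D_e D_{e'}` lies in
both. -/
theorem mul_eq_zero_of_unit_ne (hds : P.directSum) {e e' : G} (he : 𝔾.unit e)
    (he' : 𝔾.unit e') (hne : e ≠ e') {a b : R} (ha : a ∈ P.D e) (hb : b ∈ P.D e') :
    a * b = 0 := by
  by_contra hab
  have hab_e : a * b ∈ P.D e := ((P.isRingIdeal_D_of_unit he).2.2.2 a ha b).1
  have hab_e' : a * b ∈ P.D e' := ((P.isRingIdeal_D_of_unit he').2.2.2 b hb a).2
  refine hne ((Finsupp.single_left_inj hab).1 (injOn_coeffSum_diag hds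
    (P.single_mem_diag he hab_e) (P.single_mem_diag he' hab_e') ?_))
  rw [coeffSum_single, coeffSum_single]

theorem skewMul_single_single_of_unit (hds : P.directSum) {e e' : G} (he : 𝔾.unit e)
    (he' : 𝔾.unit e') {a b : R} (ha : a ∈ P.D e) (hb : b ∈ P.D e') :
    P.skewMul (Finsupp.single e a) (Finsupp.single e' b) = Finsupp.single e (a * b) := by
  rcases eq_or_ne e e' with rfl | hne
  · have ha' : a ∈ P.D (𝔾.r e) := by rwa [he]
    have h := P.skewMul_single_r_single ha' hb
    rwa [he] at h
  · rw [P.skewMul_single_single, dif_neg (by rw [he.s_eq, he']; exact hne),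
      mul_eq_zero_of_unit_ne hds he he' hne ha hb, Finsupp.single_zero]

theorem skewMul_eq_sum_of_mem_diag (hds : P.directSum) {a b : G →₀ R} (ha : a ∈ P.diag)
    (hb : b ∈ P.diag) :
    P.skewMul a b = ∑ g ∈ a.support, ∑ k ∈ b.support, Finsupp.single g (a g * b k) := by
  unfold skewMul
  refine Finset.sum_congr rfl fun g hg => Finset.sum_congr rfl fun k hk => ?_
  rw [← P.skewMul_single_single]
  exact skewMul_single_single_of_unit hds (ha.2 g hg) (hb.2 k hk) (ha.1 g) (hb.1 k)

theorem skewMul_mem_diag (hds : P.directSum) {a b : G →₀ R} (ha : a ∈ P.diag)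
    (hb : b ∈ P.diag) : P.skewMul a b ∈ P.diag := by
  rw [skewMul_eq_sum_of_mem_diag hds ha hb]
  refine P.diagAddSubgroup.sum_mem fun g hg => P.diagAddSubgroup.sum_mem fun k _ =>
    P.single_mem_diag (ha.2 g hg) ?_
  exact ((P.isRingIdeal_D_of_unit (ha.2 g hg)).2.2.2 _ (ha.1 g) (b k)).1

theorem coeffSum_skewMul (hds : P.directSum) {a b : G →₀ R} (ha : a ∈ P.diag)
    (hb : b ∈ P.diag) : coeffSum G R (P.skewMul a b) = coeffSum G R a * coeffSum G R b := by
  simp only [skewMul_eq_sum_of_mem_diag hds ha hb, map_sum, coeffSum_single]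
  rw [coeffSum_apply, coeffSum_apply, Finset.sum_mul_sum]

theorem coeffSum_mul_eq (hds : P.directSum) {f : G →₀ R} (hf : f ∈ P.diag) {e : G}
    (he : 𝔾.unit e) {u : R} (hu : u ∈ P.D e) : coeffSum G R f * u = f e * u := by
  rw [coeffSum_apply, Finset.sum_mul]
  refine Finset.sum_eq_single e
    (fun k hk hke => mul_eq_zero_of_unit_ne hds (hf.2 k hk) he hke (hf.1 k) hu) fun he' => ?_
  rw [Finsupp.notMem_support_iff.1 he', zero_mul]

theorem exists_unit_mem_inter_ne_zero (hsu : ∀ g, IsSUnitalSet (P.D g))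
    (hds : P.directSum) {J : Set R} (hJ : IsRingIdeal J) (hJ0 : J ≠ {0}) :
    ∃ e, 𝔾.unit e ∧ ∃ c ∈ P.D e ∩ J, c ≠ 0 := by
  obtain ⟨x, hxJ, hx0⟩ := exists_mem_ne_zero_of_ne_singleton hJ.1 hJ0
  obtain ⟨f, hf, rfl⟩ := exists_mem_diag_coeffSum_eq hds x
  obtain ⟨e, hfe⟩ : ∃ e, f e ≠ 0 := by
    by_contra! h
    exact hx0 (by rw [(Finsupp.ext h : f = 0), map_zero])
  have he := hf.2 e (Finsupp.mem_support_iff.2 hfe)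
  obtain ⟨u, hu, hfu⟩ := (hsu e _ (hf.1 e)).1
  refine ⟨e, he, f e, ⟨hf.1 e, ?_⟩, hfe⟩
  rw [← hfu, ← coeffSum_mul_eq hds hf he hu]
  exact (hJ.2.2.2 _ hxJ u).1

end DirectSum

section Simplicity

variable {P}

theorem gSimple_of_gradedSimple (hsu : ∀ g, IsSUnitalSet (P.D g)) (hds : P.directSum)
    (h : P.GradedSimple) : P.GSimple := by
  intro J hJ
  refine or_iff_not_imp_left.2 fun hJ0 => ?_
  obtain ⟨e, -, c, hc, hc0⟩ := exists_unit_mem_inter_ne_zero hsu hds hJ.1 hJ0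
  rcases h _ (isGradedIdeal_skewOf hJ) with hzero | hall
  · have hmem : Finsupp.single e c ∈ P.skewOf J := single_mem_skewOf hJ.1.1 hc
    rw [hzero, Set.mem_singleton_iff, Finsupp.single_eq_zero] at hmem
    exact absurd hmem hc0
  · refine Set.eq_univ_of_forall fun x => ?_
    obtain ⟨f, hf, rfl⟩ := exists_mem_diag_coeffSum_eq hds x
    have hfJ : f ∈ P.skewOf J := hall ▸ hf.1
    exact hJ.1.sum_mem _ fun g _ => (hfJ g).2

theorem mem_diagSum_iff (hds : P.directSum) {I : Set (G →₀ R)} {e : G} (he : 𝔾.unit e)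
    {c : R} (hc : c ∈ P.D e) : c ∈ P.diagSum I ↔ Finsupp.single e c ∈ I := by
  refine ⟨?_, fun h => ⟨_, ⟨h, P.single_mem_diag he hc⟩, coeffSum_single e c⟩⟩
  rintro ⟨f, ⟨hfI, hf⟩, hfc⟩
  have hf_eq : f = Finsupp.single e c :=
    injOn_coeffSum_diag hds hf (P.single_mem_diag he hc) (hfc.trans (coeffSum_single e c).symm)
  exact hf_eq ▸ hfI

theorem IsSkewIdeal.isRingIdeal_diagSum (hds : P.directSum) {I : Set (G →₀ R)}
    (hI : P.IsSkewIdeal I) : IsRingIdeal (P.diagSum I) := by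
  refine ⟨⟨0, ⟨hI.2.1, P.diagAddSubgroup.zero_mem⟩, map_zero _⟩, ?_, ?_, ?_⟩
  · rintro _ ⟨a, ⟨haI, ha⟩, rfl⟩ _ ⟨b, ⟨hbI, hb⟩, rfl⟩
    exact ⟨a + b, ⟨hI.2.2.1 a haI b hbI, P.diagAddSubgroup.add_mem ha hb⟩, map_add _ a b⟩
  · rintro _ ⟨a, ⟨haI, ha⟩, rfl⟩
    exact ⟨-a, ⟨hI.2.2.2.1 a haI, P.diagAddSubgroup.neg_mem ha⟩, map_neg _ a⟩
  · rintro _ ⟨a, ⟨haI, ha⟩, rfl⟩ y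
    obtain ⟨b, hb, rfl⟩ := exists_mem_diag_coeffSum_eq hds y
    have hmul := hI.2.2.2.2 a haI b (P.diag_subset_carrier hb)
    exact ⟨⟨_, ⟨hmul.1, skewMul_mem_diag hds ha hb⟩, coeffSum_skewMul hds ha hb⟩,
      ⟨_, ⟨hmul.2, skewMul_mem_diag hds hb ha⟩, coeffSum_skewMul hds hb ha⟩⟩

/-- `x δ_{s g} ∈ I` is moved to `x δ_{g⁻¹}`, and a left s-unit `u δ_g` of `α_g(x)` turns it
into `α_g(x) δ_{r g}`. -/
theorem IsSkewIdeal.act_mem_diagSum (hsu : ∀ g, IsSUnitalSet (P.D g)) (hds : P.directSum)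
    {I : Set (G →₀ R)} (hI : P.IsSkewIdeal I) (g : G) {x : R}
    (hx : x ∈ P.D (𝔾.inv g) ∩ P.diagSum I) : P.act g x ∈ P.diagSum I := by
  have hxs : Finsupp.single (𝔾.s g) x ∈ I :=
    (mem_diagSum_iff hds (DGroupoid.unit_s g) (P.D_inv_subset_D_s g hx.1)).1 hx.2
  have hx_inv : Finsupp.single (𝔾.inv g) x ∈ I :=
    hI.single_mem_of_single_r_mem hsu hx.1 (by rwa [𝔾.r_inv])
  have hgx := P.act_mem g x hx.1
  obtain ⟨u, hu, hux⟩ := (hsu g _ hgx).2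
  have hmul := (hI.2.2.2.2 _ hx_inv _ (P.single_mem_carrier hu)).2
  rw [P.skewMul_single_single_inv, P.act_mul g _ (P.act_inv_mem hu) _ hx.1, P.act_act_inv hu,
    hux] at hmul
  exact (mem_diagSum_iff hds (DGroupoid.unit_r g) (P.subset_r g hgx)).2 hmul

theorem IsGradedIdeal.diagSum_ne_zero (hsu : ∀ g, IsSUnitalSet (P.D g)) (hds : P.directSum)
    {I : Set (G →₀ R)} (hI : P.IsGradedIdeal I) (hI0 : I ≠ {0}) : P.diagSum I ≠ {0} := by
  obtain ⟨a, haI, ha0⟩ := exists_mem_ne_zero_of_ne_singleton hI.1.2.1 hI0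
  obtain ⟨g, hg⟩ : ∃ g, a g ≠ 0 := by
    by_contra! h
    exact ha0 (Finsupp.ext h)
  have hag := hI.1.1 haI g
  have hmem : a g ∈ P.diagSum I :=
    (mem_diagSum_iff hds (DGroupoid.unit_r g) (P.subset_r g hag)).2
      (hI.1.single_r_mem hsu hag (hI.2 a haI g))
  exact fun h => hg (Set.mem_singleton_iff.1 (h ▸ hmem))

theorem IsSkewIdeal.eq_carrier_of_diagSum_eq_univ (hsu : ∀ g, IsSUnitalSet (P.D g))
    (hds : P.directSum) {I : Set (G →₀ R)} (hI : P.IsSkewIdeal I)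
    (h : P.diagSum I = Set.univ) : I = P.carrier := by
  refine hI.1.antisymm fun b hb => hI.mem_of_forall_single_mem fun g => ?_
  have hbg : b g ∈ P.diagSum I := h ▸ Set.mem_univ _
  exact hI.single_mem_of_single_r_mem hsu (hb g)
    ((mem_diagSum_iff hds (DGroupoid.unit_r g) (P.subset_r g (hb g))).1 hbg)

theorem gradedSimple_of_gSimple (hsu : ∀ g, IsSUnitalSet (P.D g)) (hds : P.directSum)
    (h : P.GSimple) : P.GradedSimple := by
  intro I hI
  refine or_iff_not_imp_left.2 fun hI0 => hI.1.eq_carrier_of_diagSum_eq_univ hsu hds ?_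
  have hJ : P.IsInvIdeal (P.diagSum I) :=
    ⟨hI.1.isRingIdeal_diagSum hds, fun g _ hx => hI.1.act_mem_diagSum hsu hds g hx⟩
  exact (h _ hJ).resolve_left (hI.diagSum_ne_zero hsu hds hI0)

end Simplicity

end PartialAction

/-- **Statement 11.** `R` is `G`-simple if, and only if, `R ⋊_α G` is graded simple. -/
theorem gSimple_iff_gradedSimple {G R : Type*} [NonUnitalRing R]
    (𝔾 : DGroupoid G) (P : PartialAction 𝔾 R)
    (hsu : ∀ g, IsSUnitalSet (P.D g)) (hds : P.directSum) :
    P.GSimple ↔ P.GradedSimple :=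
  ⟨PartialAction.gradedSimple_of_gSimple hsu hds, PartialAction.gSimple_of_gradedSimple hsu hds⟩
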